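/- There exist absolute constants K₁, K₂ > 0 such that for all natural numbers m, t, t_e with m ≥ 4, t + t_e ≥ 1, and K₁·(t+t_e)·log₂(m)·log₂(log₂ m) ≤ m, there exist a natural number n with n ≤ m + K₂·(t+t_e)·log₂(m)·log₂(m/(t+t_e)) and an injective encoding map Enc : {0,1}^m → {0,1}^n whose image is a t-breaks t_e-edit-errors resilient code of length n. -/

import Mathlib

/-- Costs for the Levenshtein distance (formerly `Mathlib.Data.List.EditDistance`). -/
structure Levenshtein.Cost (α β δ : Type*) where
  delete : α → δ
  insert : β → δ
  substitute : α → β → δ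

/-- The default cost: every operation costs 1, substituting equal letters costs 0. -/
def Levenshtein.defaultCost {α : Type*} [DecidableEq α] : Levenshtein.Cost α α ℕ where
  delete _ := 1
  insert _ := 1
  substitute a b := if a = b then 0 else 1

/-- The Levenshtein distance, characterized by the recursion equations of the removed
Mathlib definition. -/
def levenshtein {α β δ : Type*} [AddZeroClass δ] [Min δ] (C : Levenshtein.Cost α β δ) :
    List α → List β → δ
  | [], [] => 0
  | x :: xs, [] => C.delete x + levenshtein C xs []
  | [], y :: ys => C.insert y + levenshtein C [] ys
  | x :: xs, y :: ys =>
    min (C.delete x + levenshtein C xs (y :: ys))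
      (min (C.insert y + levenshtein C (x :: xs) ys) (C.substitute x y + levenshtein C xs ys))

/-- The edit (Levenshtein) distance between two binary words. -/
def editDist (x y : List Bool) : ℕ :=
  levenshtein Levenshtein.defaultCost x y

/-- The `t`-breaks `te`-edit-errors channel output set of a binary word `w`. -/
def BreakEdit (t te : ℕ) (w : List Bool) : Set (Multiset (List Bool)) :=
  { S | Multiset.card S = t + 1 ∧ (∀ f ∈ S, f ≠ []) ∧
      ∃ l : List (List Bool), (l : Multiset (List Bool)) = S ∧ editDist l.flatten w ≤ te }

/-- A set of words is `t`-breaks `te`-edit-errors resilient if the channel output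
sets of distinct codewords are disjoint. -/
def ResilientBESet (t te : ℕ) (C : Set (List Bool)) : Prop :=
  ∀ c ∈ C, ∀ c' ∈ C, c ≠ c' → BreakEdit t te c ∩ BreakEdit t te c' = ∅

/-
A word `c'` can share a channel output with `c` only if it arises from `c` by at most `t_e` edits,
a cut into `t + 1` pieces that are reassembled in some order, and at most `t_e` further edits.
For words of length `n` this leaves at most `M ^ (2s + 1)` candidates, `M = 6 (n + 2s + 1)`,
`s = t + t_e`, so a greedy (Gilbert–Varshamov) choice among the `2 ^ n` words of length `n` gives a
resilient code with `2 ^ n / M ^ (2s + 1)` codewords. For `n = m + 12 s ⌈log₂ m⌉` this is at least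
`2 ^ m`, and the hypothesis on `m` makes `m / s ≥ 2`, so the redundancy is `O(s log m log (m / s))`.
-/

theorem Finset.exists_independent_subset_card_mul_ge {α : Type*} [DecidableEq α]
    {R : α → α → Prop} (hR : ∀ a b, R a b → R b a) (f : α → Finset α) (self_mem : ∀ a, a ∈ f a)
    (mem_of_rel : ∀ a b, R a b → b ∈ f a) {W : ℕ} (U : Finset α)
    (hW : ∀ a ∈ U, (f a).card ≤ W) :
    ∃ S ⊆ U, U.card ≤ S.card * W ∧ (S : Set α).Pairwise fun a b => ¬R a b := by
  induction U using Finset.strongInduction with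
  | H U ih =>
    obtain rfl | ⟨a, ha⟩ := U.eq_empty_or_nonempty
    · exact ⟨∅, by simp⟩
    have ha' : a ∉ U \ f a := fun h => (Finset.mem_sdiff.1 h).2 (self_mem a)
    obtain ⟨S, hSU, hcard, hS⟩ := ih (U \ f a)
      ((Finset.ssubset_iff_of_subset Finset.sdiff_subset).2 ⟨a, ha, ha'⟩)
      fun b hb => hW b (Finset.sdiff_subset hb)
    have haS : a ∉ S := fun h => ha' (hSU h)
    refine ⟨insert a S, Finset.insert_subset ha (hSU.trans Finset.sdiff_subset), ?_, ?_⟩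
    · calc U.card ≤ (U \ f a).card + (f a).card := Finset.card_le_card_sdiff_add_card
        _ ≤ S.card * W + W := add_le_add hcard (hW a ha)
        _ = (insert a S).card * W := by rw [Finset.card_insert_of_notMem haS, add_one_mul]
    · rw [Finset.coe_insert]
      refine hS.insert_of_notMem haS fun b hb => ?_
      have hab : ¬R a b := fun h => (Finset.mem_sdiff.1 (hSU hb)).2 (mem_of_rel a b h)
      exact ⟨hab, fun h => hab (hR b a h)⟩

lemma ResilientBESet.mono {t te : ℕ} {C C' : Set (List Bool)} (h : ResilientBESet t te C)
    (hC : C' ⊆ C) : ResilientBESet t te C' :=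
  fun c hc c' hc' => h c (hC hc) c' (hC hc')

lemma editDist_nil_cons (b : Bool) (ys : List Bool) :
    editDist [] (b :: ys) = editDist [] ys + 1 := by
  rw [editDist, levenshtein, add_comm]; rfl

lemma editDist_cons_nil (a : Bool) (xs : List Bool) :
    editDist (a :: xs) [] = editDist xs [] + 1 := by
  rw [editDist, levenshtein, add_comm]; rfl

lemma editDist_cons_cons (a b : Bool) (xs ys : List Bool) :
    editDist (a :: xs) (b :: ys) =
      min (editDist xs (b :: ys) + 1)
        (min (editDist (a :: xs) ys + 1) (editDist xs ys + if a = b then 0 else 1)) := by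
  simp only [editDist, levenshtein, Levenshtein.defaultCost, add_comm]

lemma clog_two_lt_logb_add_one (m : ℕ) : (Nat.clog 2 m : ℝ) < Real.logb 2 m + 1 := by
  rw [← Real.natCeil_logb_natCast]
  exact Nat.ceil_lt_add_one
    (div_nonneg (Real.log_natCast_nonneg m) (Real.log_nonneg one_le_two))

lemma le_logb_two_of_two_rpow_le {x y : ℝ} (h : (2 : ℝ) ^ y ≤ x) : y ≤ Real.logb 2 x :=
  (Real.le_logb_iff_rpow_le one_lt_two (lt_of_lt_of_le (by positivity) h)).2 h

namespace ResilientCode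

/-- At most one insertion, deletion or substitution, encoded symmetrically as the replacement of a
factor of length `≤ 1` by another one. -/
def OneEdit (x y : List Bool) : Prop :=
  ∃ u v a b : List Bool, a.length ≤ 1 ∧ b.length ≤ 1 ∧ x = u ++ a ++ v ∧ y = u ++ b ++ v

namespace OneEdit

lemma refl (x : List Bool) : OneEdit x x := ⟨x, [], [], [], by simp⟩

lemma symm {x y : List Bool} : OneEdit x y → OneEdit y x
  | ⟨u, v, a, b, ha, hb, hx, hy⟩ => ⟨u, v, b, a, hb, ha, hy, hx⟩

lemma cons {x y : List Bool} (c : Bool) : OneEdit x y → OneEdit (c :: x) (c :: y)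
  | ⟨u, v, a, b, ha, hb, hx, hy⟩ => ⟨c :: u, v, a, b, ha, hb, by simp [hx], by simp [hy]⟩

lemma cons_left (a : Bool) (x : List Bool) : OneEdit (a :: x) x := ⟨[], x, [a], [], by simp⟩

lemma cons_right (b : Bool) (x : List Bool) : OneEdit x (b :: x) := (cons_left b x).symm

lemma cons_cons (a b : Bool) (x : List Bool) : OneEdit (a :: x) (b :: x) :=
  ⟨[], x, [a], [b], by simp⟩

lemma length_le {x y : List Bool} : OneEdit x y → y.length ≤ x.length + 1
  | ⟨u, v, a, b, ha, hb, hx, hy⟩ => by subst hx hy; simp; omega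

end OneEdit

def neighbours (x : List Bool) : Finset (List Bool) :=
  ((Finset.range (x.length + 1) ×ˢ Finset.range 2) ×ˢ {[], [true], [false]}).image
    fun p => x.take p.1.1 ++ p.2 ++ x.drop (p.1.1 + p.1.2)

lemma mem_neighbours {x y : List Bool} : y ∈ neighbours x ↔ OneEdit x y := by
  constructor
  · simp only [neighbours, Finset.mem_image, Finset.mem_product, Finset.mem_range,
      Finset.mem_insert, Finset.mem_singleton]
    rintro ⟨⟨⟨i, j⟩, b⟩, ⟨⟨-, hj⟩, hb⟩, rfl⟩
    refine ⟨x.take i, x.drop (i + j), (x.drop i).take j, b, by simp at hj ⊢; omega,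
      by rcases hb with rfl | rfl | rfl <;> simp, ?_, rfl⟩
    rw [List.append_assoc, ← List.drop_drop, List.take_append_drop, List.take_append_drop]
  · rintro ⟨u, v, a, b, ha, hb, rfl, rfl⟩
    simp only [neighbours, Finset.mem_image, Finset.mem_product, Finset.mem_range,
      Finset.mem_insert, Finset.mem_singleton]
    refine ⟨((u.length, a.length), b), ⟨⟨by simp, by simp; omega⟩, ?_⟩, ?_⟩
    · match b, hb with
      | [], _ => simp
      | [c], _ => cases c <;> simp
    · simp [List.drop_append]

lemma card_neighbours_le (x : List Bool) : (neighbours x).card ≤ 6 * (x.length + 1) := by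
  refine Finset.card_image_le.trans ?_
  simp only [Finset.card_product, Finset.card_range]
  grw [Finset.card_le_three]
  omega

def editBall : ℕ → List Bool → Finset (List Bool)
  | 0, x => {x}
  | k + 1, x => (neighbours x).biUnion (editBall k)

lemma mem_editBall_succ {k : ℕ} {x y : List Bool} :
    y ∈ editBall (k + 1) x ↔ ∃ z, OneEdit x z ∧ y ∈ editBall k z := by
  simp [editBall, mem_neighbours]

lemma self_mem_editBall (k : ℕ) (x : List Bool) : x ∈ editBall k x := by
  induction k with
  | zero => simp [editBall]
  | succ k ih => exact mem_editBall_succ.2 ⟨x, .refl x, ih⟩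

lemma editBall_subset_succ (k : ℕ) (x : List Bool) : editBall k x ⊆ editBall (k + 1) x := by
  induction k generalizing x with
  | zero => simpa [editBall] using self_mem_editBall 1 x
  | succ k ih =>
    intro y hy
    obtain ⟨z, hxz, hy⟩ := mem_editBall_succ.1 hy
    exact mem_editBall_succ.2 ⟨z, hxz, ih z hy⟩

lemma editBall_mono {k l : ℕ} (h : k ≤ l) (x : List Bool) : editBall k x ⊆ editBall l x := by
  induction h with
  | refl => rfl
  | step _ ih => exact ih.trans (editBall_subset_succ _ x)

lemma mem_editBall_succ_of_oneEdit {k : ℕ} {x y z : List Bool} (hy : y ∈ editBall k x)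
    (hyz : OneEdit y z) : z ∈ editBall (k + 1) x := by
  induction k generalizing x with
  | zero => simp_all [editBall, mem_neighbours]
  | succ k ih =>
    obtain ⟨w, hxw, hy⟩ := mem_editBall_succ.1 hy
    exact mem_editBall_succ.2 ⟨w, hxw, ih hy⟩

lemma mem_editBall_comm {k : ℕ} {x y : List Bool} (h : y ∈ editBall k x) : x ∈ editBall k y := by
  induction k generalizing x with
  | zero => simp_all [editBall]
  | succ k ih =>
    obtain ⟨z, hxz, hy⟩ := mem_editBall_succ.1 h
    exact mem_editBall_succ_of_oneEdit (ih hy) hxz.symm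

lemma cons_mem_editBall_cons {k : ℕ} {x y : List Bool} (c : Bool) (h : y ∈ editBall k x) :
    c :: y ∈ editBall k (c :: x) := by
  induction k generalizing x with
  | zero => simp_all [editBall]
  | succ k ih =>
    obtain ⟨z, hxz, hy⟩ := mem_editBall_succ.1 h
    exact mem_editBall_succ.2 ⟨c :: z, hxz.cons c, ih hy⟩

lemma length_le_of_mem_editBall {k : ℕ} {x y : List Bool} (h : y ∈ editBall k x) :
    y.length ≤ x.length + k := by
  induction k generalizing x with
  | zero => simp_all [editBall]
  | succ k ih =>
    obtain ⟨z, hxz, hy⟩ := mem_editBall_succ.1 h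
    have := hxz.length_le
    have := ih hy
    omega

lemma card_editBall_le (k : ℕ) (x : List Bool) :
    (editBall k x).card ≤ (6 * (x.length + k + 1)) ^ k := by
  induction k generalizing x with
  | zero => simp [editBall]
  | succ k ih =>
    have hball : ∀ z ∈ neighbours x, (editBall k z).card ≤ (6 * (x.length + (k + 1) + 1)) ^ k :=
      fun z hz => (ih z).trans (Nat.pow_le_pow_left (by
        have := (mem_neighbours.1 hz).length_le; omega) k)
    calc (editBall (k + 1) x).card
        ≤ (neighbours x).card * (6 * (x.length + (k + 1) + 1)) ^ k :=
          Finset.card_biUnion_le_card_mul _ _ _ hball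
      _ ≤ 6 * (x.length + (k + 1) + 1) * (6 * (x.length + (k + 1) + 1)) ^ k := by
          gcongr
          exact (card_neighbours_le x).trans (by omega)
      _ = (6 * (x.length + (k + 1) + 1)) ^ (k + 1) := (pow_succ' _ _).symm

lemma mem_editBall_of_editDist_le {k : ℕ} {x y : List Bool} (h : editDist x y ≤ k) :
    y ∈ editBall k x := by
  induction x generalizing y k with
  | nil =>
    induction y generalizing k with
    | nil => exact self_mem_editBall k []
    | cons b ys ih =>
      rw [editDist_nil_cons] at h
      exact editBall_mono h _ (mem_editBall_succ_of_oneEdit (ih le_rfl) (.cons_right b ys))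
  | cons a xs ihx =>
    induction y generalizing k with
    | nil =>
      rw [editDist_cons_nil] at h
      exact editBall_mono h _ (mem_editBall_succ.2 ⟨xs, .cons_left a xs, ihx le_rfl⟩)
    | cons b ys ihy =>
      rw [editDist_cons_cons] at h
      rcases min_le_iff.1 h with hdel | h
      · exact editBall_mono hdel _ (mem_editBall_succ.2 ⟨xs, .cons_left a xs, ihx le_rfl⟩)
      rcases min_le_iff.1 h with hins | hsub
      · exact editBall_mono hins _ (mem_editBall_succ_of_oneEdit (ihy le_rfl) (.cons_right b ys))
      by_cases hab : a = b
      · subst hab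
        exact cons_mem_editBall_cons a (ihx (by simpa using hsub))
      · rw [if_neg hab] at hsub
        exact editBall_mono hsub _
          (mem_editBall_succ.2 ⟨b :: xs, .cons_cons a b xs, cons_mem_editBall_cons b (ihx le_rfl)⟩)


def splits : ℕ → List Bool → Finset (List (List Bool))
  | 0, w => {[w]}
  | t + 1, w => (Finset.range (w.length + 1)).biUnion fun i =>
      (splits t (w.drop i)).image (w.take i :: ·)

lemma mem_splits {t : ℕ} {w : List Bool} {l : List (List Bool)} :
    l ∈ splits t w ↔ l.length = t + 1 ∧ l.flatten = w := by
  induction t generalizing w l with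
  | zero =>
    constructor
    · rintro h; simp_all [splits]
    · rintro ⟨hl, rfl⟩
      obtain ⟨a, rfl⟩ := List.length_eq_one_iff.1 hl
      simp [splits]
  | succ t ih =>
    simp only [splits, Finset.mem_biUnion, Finset.mem_range, Finset.mem_image, ih]
    constructor
    · rintro ⟨i, -, l, ⟨hl, hfl⟩, rfl⟩
      simp [hl, hfl]
    · rintro ⟨hl, rfl⟩
      obtain ⟨a, l, rfl⟩ := List.exists_cons_of_length_eq_add_one hl
      exact ⟨a.length, by simp, l, ⟨by simpa using hl, by simp⟩, by simp⟩

lemma card_splits_le (t : ℕ) (w : List Bool) : (splits t w).card ≤ (w.length + 1) ^ t := by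
  induction t generalizing w with
  | zero => simp [splits]
  | succ t ih =>
    calc (splits (t + 1) w).card ≤ (Finset.range (w.length + 1)).card * (w.length + 1) ^ t :=
          Finset.card_biUnion_le_card_mul _ _ _ fun i _ => Finset.card_image_le.trans
            ((ih _).trans (Nat.pow_le_pow_left (by simp) t))
      _ = (w.length + 1) ^ (t + 1) := by rw [Finset.card_range, pow_succ']

def reassemblies (t : ℕ) (w : List Bool) : Finset (List Bool) :=
  (splits t w).biUnion fun l => l.permutations.toFinset.image List.flatten

lemma flatten_mem_reassemblies {t : ℕ} {l l' : List (List Bool)} (hl : l.length = t + 1)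
    (hl' : l'.Perm l) : l'.flatten ∈ reassemblies t l.flatten := by
  simp only [reassemblies, Finset.mem_biUnion, Finset.mem_image, List.mem_toFinset,
    List.mem_permutations]
  exact ⟨l, mem_splits.2 ⟨hl, rfl⟩, l', hl', rfl⟩

lemma self_mem_reassemblies (t : ℕ) (w : List Bool) : w ∈ reassemblies t w := by
  simpa using flatten_mem_reassemblies (t := t) (l := w :: List.replicate t []) (by simp)
    (.refl _)

lemma length_of_mem_reassemblies {t : ℕ} {w v : List Bool} (h : v ∈ reassemblies t w) :
    v.length = w.length := by
  simp only [reassemblies, Finset.mem_biUnion, Finset.mem_image, List.mem_toFinset,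
    List.mem_permutations, mem_splits] at h
  obtain ⟨l, ⟨-, rfl⟩, l', hperm, rfl⟩ := h
  simp only [List.length_flatten]
  exact (hperm.map _).sum_eq

lemma card_reassemblies_le (t : ℕ) (w : List Bool) :
    (reassemblies t w).card ≤ (w.length + 1) ^ t * (t + 1) ^ (t + 1) := by
  refine (Finset.card_biUnion_le_card_mul _ _ _ fun l hl => ?_).trans
    (Nat.mul_le_mul_right _ (card_splits_le t w))
  calc (l.permutations.toFinset.image List.flatten).card ≤ l.permutations.length :=
        Finset.card_image_le.trans (List.toFinset_card_le _)
    _ = (t + 1).factorial := by rw [List.length_permutations, (mem_splits.1 hl).1]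
    _ ≤ (t + 1) ^ (t + 1) := Nat.factorial_le_pow _

def confusable (t te : ℕ) (c : List Bool) : Finset (List Bool) :=
  (editBall te c).biUnion fun w => (reassemblies t w).biUnion (editBall te)

lemma self_mem_confusable (t te : ℕ) (c : List Bool) : c ∈ confusable t te c := by
  simp only [confusable, Finset.mem_biUnion]
  exact ⟨c, self_mem_editBall te c, c, self_mem_reassemblies t c, self_mem_editBall te c⟩

lemma mem_confusable_of_nonempty_inter {t te : ℕ} {c c' : List Bool}
    (h : (BreakEdit t te c ∩ BreakEdit t te c').Nonempty) : c' ∈ confusable t te c := by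
  obtain ⟨S, ⟨hcard, -, l, rfl, hl⟩, -, -, l', hll', hl'⟩ := h
  simp only [confusable, Finset.mem_biUnion]
  refine ⟨l.flatten, mem_editBall_comm (mem_editBall_of_editDist_le hl), l'.flatten,
    flatten_mem_reassemblies (by simpa using hcard) (Multiset.coe_eq_coe.1 hll'),
    mem_editBall_of_editDist_le hl'⟩

lemma card_confusable_le (t te : ℕ) (c : List Bool) :
    (confusable t te c).card ≤ (6 * (c.length + 2 * (t + te) + 1)) ^ (2 * (t + te) + 1) := by
  set M := 6 * (c.length + 2 * (t + te) + 1)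
  have hball : ∀ w, w.length ≤ c.length + te → (editBall te w).card ≤ M ^ te :=
    fun w hw => (card_editBall_le te w).trans (Nat.pow_le_pow_left (by omega) te)
  have hinner : ∀ w ∈ editBall te c,
      ((reassemblies t w).biUnion (editBall te)).card ≤ M ^ t * M ^ (t + 1) * M ^ te := by
    intro w hw
    have hw := length_le_of_mem_editBall hw
    refine (Finset.card_biUnion_le_card_mul _ _ _ fun v hv =>
      hball v ((length_of_mem_reassemblies hv).trans_le hw)).trans (Nat.mul_le_mul_right _ ?_)
    exact (card_reassemblies_le t w).trans (Nat.mul_le_mul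
      (Nat.pow_le_pow_left (by omega) t) (Nat.pow_le_pow_left (by omega) (t + 1)))
  calc (confusable t te c).card ≤ M ^ te * (M ^ t * M ^ (t + 1) * M ^ te) :=
        (Finset.card_biUnion_le_card_mul _ _ _ hinner).trans
          (Nat.mul_le_mul_right _ (hball c (by omega)))
    _ = M ^ (2 * (t + te) + 1) := by rw [← pow_add, ← pow_add, ← pow_add]; ring_nf

lemma exists_resilient_code (t te n : ℕ) :
    ∃ S : Finset (List Bool), (∀ c ∈ S, c.length = n) ∧ ResilientBESet t te S ∧
      2 ^ n ≤ S.card * (6 * (n + 2 * (t + te) + 1)) ^ (2 * (t + te) + 1) := by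
  set U := (Finset.univ : Finset (Fin n → Bool)).image List.ofFn
  have hU : ∀ c ∈ U, c.length = n := by simp [U]
  have hUcard : U.card = 2 ^ n := by
    simp [U, Finset.card_image_of_injective _ List.ofFn_injective]
  obtain ⟨S, hSU, hcard, hS⟩ := Finset.exists_independent_subset_card_mul_ge
    (R := fun c c' => (BreakEdit t te c ∩ BreakEdit t te c').Nonempty)
    (fun c c' h => by rwa [Set.inter_comm]) (confusable t te) (self_mem_confusable t te)
    (fun _ _ => mem_confusable_of_nonempty_inter) U
    fun c hc => hU c hc ▸ card_confusable_le t te c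
  refine ⟨S, fun c hc => hU c (hSU hc), fun c hc c' hc' hne => ?_, hUcard ▸ hcard⟩
  exact Set.not_nonempty_iff_eq_empty.1 (hS hc hc' hne)

lemma exists_resilient_encoder (t te m n : ℕ)
    (h : 2 ^ m * (6 * (n + 2 * (t + te) + 1)) ^ (2 * (t + te) + 1) ≤ 2 ^ n) :
    ∃ Enc : (Fin m → Bool) → List Bool, Function.Injective Enc ∧
      (∀ x, (Enc x).length = n) ∧ ResilientBESet t te (Set.range Enc) := by
  obtain ⟨S, hlen, hres, hcard⟩ := exists_resilient_code t te n
  have hmS : Fintype.card (Fin m → Bool) ≤ Fintype.card S := by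
    simpa using le_of_mul_le_mul_right (h.trans hcard) (by positivity)
  obtain ⟨emb⟩ := Function.Embedding.nonempty_of_card_le hmS
  refine ⟨fun x => emb x, Subtype.val_injective.comp emb.injective,
    fun x => hlen _ (emb x).2, hres.mono ?_⟩
  rintro _ ⟨x, rfl⟩
  exact (emb x).2

lemma two_pow_mul_le_two_pow {m s L : ℕ} (hs : 1 ≤ s) (hm : 4 ≤ m) (hmL : m ≤ 2 ^ L)
    (hsL : 12 * s * L ≤ m) :
    2 ^ m * (6 * (m + 12 * s * L + 2 * s + 1)) ^ (2 * s + 1) ≤ 2 ^ (m + 12 * s * L) := by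
  have hL : 2 ≤ L := by
    by_contra! hL
    have : 2 ^ L ≤ 2 ^ 1 := Nat.pow_le_pow_right two_pos (by omega)
    omega
  have hbase : 6 * (m + 12 * s * L + 2 * s + 1) ≤ 2 ^ (L + 5) := by
    rw [pow_add]; nlinarith
  have hexp : (L + 5) * (2 * s + 1) ≤ 12 * s * L := by nlinarith
  rw [pow_add 2 m]
  refine Nat.mul_le_mul_left _ ?_
  calc (6 * (m + 12 * s * L + 2 * s + 1)) ^ (2 * s + 1) ≤ (2 ^ (L + 5)) ^ (2 * s + 1) := by gcongr
    _ ≤ 2 ^ (12 * s * L) := by rw [← pow_mul]; exact Nat.pow_le_pow_right two_pos hexp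

end ResilientCode

open ResilientCode in
theorem exists_resilient_code_with_encoder :
    ∃ K₁ K₂ : ℝ, 0 < K₁ ∧ 0 < K₂ ∧
      ∀ m t te : ℕ, 4 ≤ m → 1 ≤ t + te →
        K₁ * ((t + te : ℕ) : ℝ) * Real.logb 2 m * Real.logb 2 (Real.logb 2 m) ≤ (m : ℝ) →
        ∃ n : ℕ, ∃ Enc : (Fin m → Bool) → List Bool,
          (n : ℝ) ≤ (m : ℝ) +
            K₂ * ((t + te : ℕ) : ℝ) * Real.logb 2 m *
              Real.logb 2 ((m : ℝ) / ((t + te : ℕ) : ℝ)) ∧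
          Function.Injective Enc ∧
          (∀ x : Fin m → Bool, (Enc x).length = n) ∧
          ResilientBESet t te (Set.range Enc) := by
  refine ⟨100, 18, by norm_num, by norm_num, fun m t te hm hs hK => ?_⟩
  set s := t + te
  set L := Nat.clog 2 m
  have hlog : 2 ≤ Real.logb 2 m := le_logb_two_of_two_rpow_le (by norm_num [hm])
  have hloglog : 1 ≤ Real.logb 2 (Real.logb 2 m) := le_logb_two_of_two_rpow_le (by simpa)
  have hL : (L : ℝ) < Real.logb 2 m + 1 := clog_two_lt_logb_add_one m
  have hslog : 100 * s * Real.logb 2 m ≤ m := by nlinarith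
  have hsL : 12 * s * L ≤ m := by exact_mod_cast (by nlinarith : (12 * s * L : ℝ) ≤ m)
  obtain ⟨Enc, hinj, hlen, hres⟩ := exists_resilient_encoder t te m (m + 12 * s * L)
    (two_pow_mul_le_two_pow hs hm (Nat.le_pow_clog one_lt_two m) hsL)
  refine ⟨m + 12 * s * L, Enc, ?_, hinj, hlen, hres⟩
  have hlogms : 1 ≤ Real.logb 2 (m / s) :=
    le_logb_two_of_two_rpow_le (by rw [Real.rpow_one, le_div_iff₀ (by positivity)]; nlinarith)
  push_cast
  nlinarith [mul_le_mul_of_nonneg_left hlogms (by positivity : (0 : ℝ) ≤ 18 * s * Real.logb 2 m)]
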